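/- arXiv:math/0405595 — 2 statements merged into one kernel-verified Lean document; each statement's English description precedes it below -/
import Mathlib

section
/- For every N×N Hermitian complex matrix A, ∫_0^π ∫_ℝ |p_A(x,φ)| dx dφ ≤ ‖A‖₁. In particular, for any two N×N density matrices ρ and τ, the L¹-distance between the probability densities p_ρ and p_τ is at most the trace-norm distance ‖ρ − τ‖₁. -/
open MeasureTheory ComplexOrder

/-- The physicists' Hermite polynomials, defined by `H₀ = 1`,
`H_{k+1}(x) = 2x H_k(x) − H_k'(x)`. -/
noncomputable def physHermite : ℕ → Polynomial ℝ
  | 0 => 1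
  | n + 1 => 2 * Polynomial.X * physHermite n - Polynomial.derivative (physHermite n)

/-- Normalizing constant `c_k = (√π 2^k k!)^{-1/2}` making `∫ ψ_k² = 1`. -/
noncomputable def hermiteConst (k : ℕ) : ℝ :=
  1 / Real.sqrt (Real.sqrt Real.pi * 2 ^ k * (k.factorial : ℝ))

/-- The `k`-th Hermite function `ψ_k(x) = c_k H_k(x) e^{-x²/2}`. -/
noncomputable def hermiteFun (k : ℕ) (x : ℝ) : ℝ :=
  hermiteConst k * (physHermite k).eval x * Real.exp (-(x ^ 2) / 2)

/-- `p_A(x,φ) = (1/π) Σ_{j,k} A_{j,k} ψ_k(x) ψ_j(x) e^{−i(j−k)φ}`. -/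
noncomputable def pFun {N : ℕ} (A : Matrix (Fin N) (Fin N) ℂ) (x φ : ℝ) : ℂ :=
  ((1 / Real.pi : ℝ) : ℂ) * ∑ j : Fin N, ∑ k : Fin N,
    A j k * ((hermiteFun k x : ℝ) : ℂ) * ((hermiteFun j x : ℝ) : ℂ) *
      Complex.exp (-Complex.I * ((((j : ℕ) : ℂ)) - (((k : ℕ) : ℂ))) * (φ : ℂ))

/-- A density matrix: positive semidefinite with trace one. -/
def IsDensityMatrix {N : ℕ} (ρ : Matrix (Fin N) (Fin N) ℂ) : Prop :=
  ρ.PosSemidef ∧ ρ.trace = 1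

/-- The trace norm of a Hermitian matrix: the sum of the absolute values of
its eigenvalues. -/
noncomputable def traceNorm {N : ℕ} (A : Matrix (Fin N) (Fin N) ℂ)
    (hA : A.IsHermitian) : ℝ :=
  ∑ i, |hA.eigenvalues i|

open Polynomial Real




lemma integrable_pow_gauss (n : ℕ) :
    Integrable (fun x : ℝ => |x| ^ n * Real.exp (-x ^ 2)) := by
  have hint : Integrable (fun x : ℝ => Real.exp (-1 * x ^ 2) +
      (2 ^ n * n.factorial : ℝ) * Real.exp (-(1/2) * x ^ 2)) :=
    (integrable_exp_neg_mul_sq one_pos).add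
      ((integrable_exp_neg_mul_sq (by norm_num : (0:ℝ) < 1/2)).const_mul _)
  refine hint.mono ?_ ?_
  · exact ((continuous_abs.pow n).mul (continuous_id.pow 2).neg.rexp).aestronglyMeasurable
  · refine Filter.Eventually.of_forall fun x => ?_
    have h1 : 0 ≤ |x| ^ n * Real.exp (-x ^ 2) :=
      mul_nonneg (pow_nonneg (abs_nonneg x) n) (Real.exp_pos _).le
    rw [Real.norm_of_nonneg h1]
    have key : |x| ^ n ≤ 1 + (2 ^ n * n.factorial : ℝ) * Real.exp (x ^ 2 / 2) := by
      rcases le_total (|x|) 1 with h | h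
      · have : |x| ^ n ≤ 1 := pow_le_one₀ (abs_nonneg x) h
        have : (0:ℝ) ≤ (2 ^ n * n.factorial : ℝ) * Real.exp (x ^ 2 / 2) :=
          mul_nonneg (by positivity) (Real.exp_pos _).le
        linarith
      · have h2 : |x| ^ n ≤ |x| ^ (2 * n) :=
          pow_le_pow_right₀ h (by omega)
        have h3 : |x| ^ (2 * n) = (x ^ 2) ^ n := by
          rw [pow_mul, sq_abs]
        have h4 : (x ^ 2 / 2) ^ n / n.factorial ≤ Real.exp (x ^ 2 / 2) := by
          have := Real.sum_le_exp_of_nonneg (x := x ^ 2 / 2) (by positivity) (n + 1)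
          refine le_trans ?_ this
          exact Finset.single_le_sum (f := fun i => (x^2/2) ^ i / i.factorial)
            (fun i _ => by positivity) (Finset.self_mem_range_succ n)
        have h4' : (x ^ 2 / 2) ^ n ≤ Real.exp (x ^ 2 / 2) * n.factorial :=
          (div_le_iff₀ (by positivity)).mp h4
        have heq : (x ^ 2) ^ n = 2 ^ n * ((x ^ 2 / 2) ^ n) := by
          rw [div_pow, mul_div_cancel₀]; positivity
        nlinarith [Real.exp_pos (x^2/2), pow_pos (show (0:ℝ) < 2 by norm_num) n]
    rw [Real.norm_of_nonneg (by positivity)]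
    calc |x| ^ n * Real.exp (-x ^ 2)
        ≤ (1 + (2 ^ n * n.factorial : ℝ) * Real.exp (x ^ 2 / 2)) * Real.exp (-x ^ 2) :=
          mul_le_mul_of_nonneg_right key (Real.exp_pos _).le
      _ = Real.exp (-1 * x ^ 2) + (2 ^ n * n.factorial : ℝ) *
            (Real.exp (x ^ 2 / 2) * Real.exp (-x ^ 2)) := by ring_nf
      _ = Real.exp (-1 * x ^ 2) + (2 ^ n * n.factorial : ℝ) * Real.exp (-(1/2) * x ^ 2) := by
          rw [← Real.exp_add]; ring_nf

lemma integrable_polyGauss (P : Polynomial ℝ) :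
    Integrable (fun x : ℝ => P.eval x * Real.exp (-x ^ 2)) := by
  have hint : Integrable (fun x : ℝ => ∑ i ∈ Finset.range (P.natDegree + 1),
      |P.coeff i| * (|x| ^ i * Real.exp (-x ^ 2))) :=
    integrable_finset_sum _ fun i _ => (integrable_pow_gauss i).const_mul _
  refine hint.mono ?_ ?_
  · exact (P.continuous_aeval.mul (continuous_id.pow 2).neg.rexp).aestronglyMeasurable
  · refine Filter.Eventually.of_forall fun x => ?_
    rw [Real.norm_eq_abs, abs_mul, Real.abs_exp]
    have h0 : 0 ≤ ∑ i ∈ Finset.range (P.natDegree + 1),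
        |P.coeff i| * (|x| ^ i * Real.exp (-x ^ 2)) :=
      Finset.sum_nonneg fun i _ => by positivity
    rw [Real.norm_of_nonneg h0]
    have hb : |P.eval x| ≤ ∑ i ∈ Finset.range (P.natDegree + 1), |P.coeff i| * |x| ^ i := by
      rw [eval_eq_sum_range]
      refine (Finset.abs_sum_le_sum_abs _ _).trans ?_
      refine Finset.sum_le_sum fun i _ => ?_
      rw [abs_mul, abs_pow]
    calc |P.eval x| * Real.exp (-x ^ 2)
        ≤ (∑ i ∈ Finset.range (P.natDegree + 1), |P.coeff i| * |x| ^ i) * Real.exp (-x ^ 2) :=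
          mul_le_mul_of_nonneg_right hb (Real.exp_pos _).le
      _ = _ := by rw [Finset.sum_mul]; exact Finset.sum_congr rfl fun i _ => by ring

lemma physHermite_succ (n : ℕ) : physHermite (n + 1) =
    2 * Polynomial.X * physHermite n - Polynomial.derivative (physHermite n) := rfl

lemma derivative_physHermite (n : ℕ) :
    Polynomial.derivative (physHermite (n + 1)) = Polynomial.C (2 * (n + 1) : ℝ) * physHermite n := by
  induction n with
  | zero =>
    show Polynomial.derivative (2 * Polynomial.X * physHermite 0 - Polynomial.derivative (physHermite 0)) = _
    simp [physHermite, map_ofNat]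
  | succ n ih =>
    rw [physHermite_succ (n+1), Polynomial.derivative_sub, Polynomial.derivative_mul, ih,
      physHermite_succ n]
    simp only [Polynomial.derivative_mul, Polynomial.derivative_sub, Polynomial.derivative_X,
      Polynomial.derivative_ofNat, map_mul, map_add, Polynomial.C_1, map_ofNat,
      Nat.cast_add, Nat.cast_one, Polynomial.derivative_C, Polynomial.derivative_one]
    ring

noncomputable def J (m n : ℕ) : ℝ :=
  ∫ x : ℝ, (physHermite m).eval x * ((physHermite n).eval x * Real.exp (-x ^ 2))

lemma integrable_PQgauss (P Q : Polynomial ℝ) :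
    Integrable (fun x : ℝ => P.eval x * (Q.eval x * Real.exp (-x ^ 2))) := by
  have h := integrable_polyGauss (P * Q)
  refine h.congr (Filter.Eventually.of_forall fun x => ?_)
  simp [Polynomial.eval_mul, mul_assoc]

lemma hasDerivAt_HG (n : ℕ) (x : ℝ) :
    HasDerivAt (fun y : ℝ => (physHermite n).eval y * Real.exp (-y ^ 2))
      (-((physHermite (n + 1)).eval x * Real.exp (-x ^ 2))) x := by
  have h1 : HasDerivAt (fun y : ℝ => (physHermite n).eval y)
      ((Polynomial.derivative (physHermite n)).eval x) x := (physHermite n).hasDerivAt x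
  have h2 : HasDerivAt (fun y : ℝ => Real.exp (-y ^ 2))
      (Real.exp (-x ^ 2) * (-(2 * x))) x := by
    have := ((hasDerivAt_pow 2 x).neg).exp
    simpa using this.congr_deriv (by simp only [Pi.neg_apply]; ring)
  have := h1.mul h2
  refine this.congr_deriv ?_
  rw [physHermite_succ]
  simp [Polynomial.eval_mul, Polynomial.eval_sub]
  ring

lemma J_succ (m n : ℕ) : J m (n + 1) =
    ∫ x : ℝ, (Polynomial.derivative (physHermite m)).eval x *
      ((physHermite n).eval x * Real.exp (-x ^ 2)) := by
  have key := MeasureTheory.integral_mul_deriv_eq_deriv_mul_of_integrable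
    (u := fun x : ℝ => (physHermite m).eval x)
    (v := fun x : ℝ => (physHermite n).eval x * Real.exp (-x ^ 2))
    (u' := fun x : ℝ => (Polynomial.derivative (physHermite m)).eval x)
    (v' := fun x : ℝ => -((physHermite (n + 1)).eval x * Real.exp (-x ^ 2)))
    (fun x _ => (physHermite m).hasDerivAt x) (fun x _ => hasDerivAt_HG n x)
    ?_ ?_ ?_
  · have lhs : (∫ x : ℝ, (physHermite m).eval x *
        -((physHermite (n + 1)).eval x * Real.exp (-x ^ 2))) = -(J m (n + 1)) := by
      rw [J, ← MeasureTheory.integral_neg]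
      congr 1; funext x; ring
    rw [lhs] at key
    have := neg_injective key
    rw [this]
  · refine ((integrable_PQgauss (physHermite m) (physHermite (n + 1))).neg).congr
      (Filter.Eventually.of_forall fun x => ?_)
    simp only [Pi.mul_apply, Pi.neg_apply]; ring
  · exact (integrable_PQgauss _ _).congr (Filter.Eventually.of_forall fun x => rfl)
  · exact (integrable_PQgauss _ _).congr (Filter.Eventually.of_forall fun x => rfl)

lemma J_zero_succ (n : ℕ) : J 0 (n + 1) = 0 := by
  rw [J_succ]
  have : (physHermite 0) = 1 := rfl
  simp [this]

lemma J_succ_succ (m n : ℕ) : J (m + 1) (n + 1) = 2 * (m + 1) * J m n := by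
  rw [J_succ, derivative_physHermite, J, ← MeasureTheory.integral_const_mul]
  congr 1; funext x
  simp [Polynomial.eval_mul]
  ring

lemma J_symm (m n : ℕ) : J m n = J n m := by
  unfold J; congr 1; funext x; ring

lemma J_zero_zero : J 0 0 = Real.sqrt Real.pi := by
  have : J 0 0 = ∫ x : ℝ, Real.exp (-1 * x ^ 2) := by
    unfold J; congr 1; funext x
    have : (physHermite 0) = 1 := rfl
    simp [this]
  rw [this, integral_gaussian]
  simp

lemma J_eq (n m : ℕ) : J m n =
    if m = n then Real.sqrt Real.pi * 2 ^ n * n.factorial else 0 := by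
  induction n generalizing m with
  | zero =>
    rcases m with _ | m
    · simp [J_zero_zero]
    · rw [J_symm, J_zero_succ]; simp
  | succ n ih =>
    rcases m with _ | m
    · rw [J_zero_succ]; simp
    · rw [J_succ_succ, ih m]
      by_cases h : m = n
      · subst h
        simp [Nat.factorial_succ]
        push_cast
        ring
      · simp [h, fun hh => h (Nat.succ_injective hh)]





lemma hermiteFun_mul (j k : ℕ) (x : ℝ) : hermiteFun j x * hermiteFun k x =
    hermiteConst j * hermiteConst k *
      ((physHermite j).eval x * ((physHermite k).eval x * Real.exp (-x ^ 2))) := by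
  unfold hermiteFun
  have hexp : Real.exp (-(x^2)/2) * Real.exp (-(x^2)/2) = Real.exp (-x^2) := by
    rw [← Real.exp_add]; ring_nf
  linear_combination (hermiteConst j * (physHermite j).eval x * hermiteConst k *
    (physHermite k).eval x) * hexp

lemma integrable_hermiteFun_mul (j k : ℕ) :
    Integrable (fun x => hermiteFun j x * hermiteFun k x) := by
  refine ((integrable_PQgauss (physHermite j) (physHermite k)).const_mul
    (hermiteConst j * hermiteConst k)).congr (Filter.Eventually.of_forall fun x =>
      (hermiteFun_mul j k x).symm)

lemma integral_hermiteFun_mul (j k : ℕ) :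
    (∫ x : ℝ, hermiteFun j x * hermiteFun k x) = if j = k then 1 else 0 := by
  have : (∫ x : ℝ, hermiteFun j x * hermiteFun k x) =
      hermiteConst j * hermiteConst k * J j k := by
    rw [J, ← MeasureTheory.integral_const_mul]
    congr 1; funext x; rw [hermiteFun_mul]
  rw [this, J_eq]
  by_cases h : j = k
  · subst h
    have hD : (0:ℝ) < Real.sqrt Real.pi * 2 ^ j * (j.factorial : ℝ) := by
      have := Real.sqrt_pos.mpr Real.pi_pos
      positivity
    have hs : hermiteConst j * hermiteConst j =
        1 / (Real.sqrt Real.pi * 2 ^ j * (j.factorial : ℝ)) := by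
      unfold hermiteConst
      rw [div_mul_div_comm, one_mul, Real.mul_self_sqrt hD.le]
    rw [if_pos rfl, if_pos rfl, hs, one_div, inv_mul_cancel₀ hD.ne']
  · simp [h]





lemma conj_exp_phase (k : ℕ) (φ : ℝ) :
    (starRingEnd ℂ) (Complex.exp (-Complex.I * k * φ)) = Complex.exp (Complex.I * k * φ) := by
  rw [← Complex.exp_conj]
  congr 1
  simp [map_mul]

lemma exp_phase_split (j k : ℕ) (φ : ℝ) :
    Complex.exp (-Complex.I * ((j:ℂ) - (k:ℂ)) * φ)
      = Complex.exp (-Complex.I * j * φ) * Complex.exp (Complex.I * k * φ) := by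
  rw [← Complex.exp_add]; congr 1; ring

lemma abs_exp_phase (k : ℕ) (φ : ℝ) : ‖Complex.exp (-Complex.I * k * φ)‖ = 1 := by
  rw [Complex.norm_exp]
  norm_num [Complex.mul_re, Complex.mul_im]

section Main
variable {N : ℕ} (A : Matrix (Fin N) (Fin N) ℂ) (hA : A.IsHermitian)

lemma entry_formula (j k : Fin N) :
    A j k = ∑ m : Fin N, (hA.eigenvectorUnitary : Matrix (Fin N) (Fin N) ℂ) j m *
      ((hA.eigenvalues m : ℝ) : ℂ) *
      (starRingEnd ℂ) ((hA.eigenvectorUnitary : Matrix (Fin N) (Fin N) ℂ) k m) := by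
  conv_lhs => rw [hA.spectral_theorem, Unitary.conjStarAlgAut_apply]
  rw [Matrix.mul_apply]
  refine Finset.sum_congr rfl fun m _ => ?_
  rw [Matrix.mul_diagonal, Matrix.star_apply]
  rfl

lemma pFun_key (x φ : ℝ) :
    pFun A x φ = ((1 / Real.pi : ℝ) : ℂ) * ∑ m : Fin N,
      ((hA.eigenvalues m : ℝ) : ℂ) *
        ((∑ j : Fin N, (hA.eigenvectorUnitary : Matrix (Fin N) (Fin N) ℂ) j m *
            Complex.exp (-Complex.I * (j:ℕ) * φ) * ((hermiteFun j x : ℝ) : ℂ)) *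
         (starRingEnd ℂ) (∑ j : Fin N, (hA.eigenvectorUnitary : Matrix (Fin N) (Fin N) ℂ) j m *
            Complex.exp (-Complex.I * (j:ℕ) * φ) * ((hermiteFun j x : ℝ) : ℂ))) := by
  rw [pFun]
  congr 1
  have expand : ∀ m : Fin N,
      ((∑ j : Fin N, (hA.eigenvectorUnitary : Matrix (Fin N) (Fin N) ℂ) j m *
          Complex.exp (-Complex.I * (j:ℕ) * φ) * ((hermiteFun j x : ℝ) : ℂ)) *
       (starRingEnd ℂ) (∑ j : Fin N, (hA.eigenvectorUnitary : Matrix (Fin N) (Fin N) ℂ) j m *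
          Complex.exp (-Complex.I * (j:ℕ) * φ) * ((hermiteFun j x : ℝ) : ℂ))) =
      ∑ j : Fin N, ∑ k : Fin N,
        ((hA.eigenvectorUnitary : Matrix (Fin N) (Fin N) ℂ) j m *
          Complex.exp (-Complex.I * (j:ℕ) * φ) * ((hermiteFun j x : ℝ) : ℂ)) *
        ((starRingEnd ℂ) ((hA.eigenvectorUnitary : Matrix (Fin N) (Fin N) ℂ) k m) *
          Complex.exp (Complex.I * (k:ℕ) * φ) * ((hermiteFun k x : ℝ) : ℂ)) := by
    intro m
    rw [map_sum, Finset.sum_mul_sum]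
    refine Finset.sum_congr rfl fun j _ => Finset.sum_congr rfl fun k _ => ?_
    rw [map_mul, map_mul, conj_exp_phase, Complex.conj_ofReal]
  simp only [expand]
  simp only [Finset.mul_sum]
  conv_rhs => rw [Finset.sum_comm]
  refine Finset.sum_congr rfl fun j _ => ?_
  conv_rhs => rw [Finset.sum_comm]
  refine Finset.sum_congr rfl fun k _ => ?_
  rw [entry_formula A hA j k, Finset.sum_mul, Finset.sum_mul, Finset.sum_mul]
  refine Finset.sum_congr rfl fun m _ => ?_
  rw [exp_phase_split]
  ring
  

lemma column_norm (m : Fin N) :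
    ∑ j : Fin N, Complex.normSq ((hA.eigenvectorUnitary : Matrix (Fin N) (Fin N) ℂ) j m) = 1 := by
  set U := (hA.eigenvectorUnitary : Matrix (Fin N) (Fin N) ℂ) with hU
  have h1 : star U * U = 1 := (Unitary.mem_iff.mp (hA.eigenvectorUnitary).2).1
  have h2 : (star U * U) m m = (1 : Matrix (Fin N) (Fin N) ℂ) m m := by rw [h1]
  rw [Matrix.mul_apply, Matrix.one_apply_eq] at h2
  have h3 : ∀ j : Fin N, (star U) m j * U j m = ((Complex.normSq (U j m) : ℝ) : ℂ) := by
    intro j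
    rw [Matrix.star_apply, mul_comm, Complex.star_def, Complex.mul_conj]
  rw [Finset.sum_congr rfl fun j _ => h3 j] at h2
  have h4 : ((∑ j : Fin N, Complex.normSq (U j m) : ℝ) : ℂ) = 1 := by
    push_cast
    exact h2
  exact_mod_cast h4

lemma integral_bound (φ : ℝ) :
    (∫ x : ℝ, ‖pFun A x φ‖) ≤ (1 / Real.pi) * traceNorm A hA := by
  classical
  set U := (hA.eigenvectorUnitary : Matrix (Fin N) (Fin N) ℂ) with hUdef
  set a : Fin N → Fin N → ℂ := fun m j => U j m * Complex.exp (-Complex.I * (j:ℕ) * φ) with ha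
  set g : Fin N → ℝ → ℂ := fun m x =>
    ∑ j : Fin N, U j m * Complex.exp (-Complex.I * (j:ℕ) * φ) * ((hermiteFun j x : ℝ) : ℂ)
    with hg
  set c : Fin N → Fin N → Fin N → ℝ := fun m j k => (a m j * (starRingEnd ℂ) (a m k)).re
    with hc
  -- expansion of normSq g
  have hsq : ∀ (m : Fin N) (x : ℝ), Complex.normSq (g m x) =
      ∑ j : Fin N, ∑ k : Fin N, c m j k * (hermiteFun j x * hermiteFun k x) := by
    intro m x
    have h2 : g m x * (starRingEnd ℂ) (g m x) =
        ∑ j : Fin N, ∑ k : Fin N, (a m j * (starRingEnd ℂ) (a m k)) *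
          (((hermiteFun j x * hermiteFun k x : ℝ)) : ℂ) := by
      rw [hg]
      rw [map_sum, Finset.sum_mul_sum]
      refine Finset.sum_congr rfl fun j _ => Finset.sum_congr rfl fun k _ => ?_
      rw [map_mul, Complex.conj_ofReal, ha]
      push_cast
      ring
    have h1 : Complex.normSq (g m x) = (g m x * (starRingEnd ℂ) (g m x)).re := by
      rw [Complex.mul_conj, Complex.ofReal_re]
    rw [h1, h2, Complex.re_sum]
    refine Finset.sum_congr rfl fun j _ => ?_
    rw [Complex.re_sum]
    refine Finset.sum_congr rfl fun k _ => ?_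
    simp [hc, Complex.mul_re, Complex.ofReal_re, Complex.ofReal_im]
  -- pointwise bound
  have hpt : ∀ x : ℝ, ‖pFun A x φ‖ ≤
      (1 / Real.pi) * ∑ m : Fin N, |hA.eigenvalues m| *
        (∑ j : Fin N, ∑ k : Fin N, c m j k * (hermiteFun j x * hermiteFun k x)) := by
    intro x
    rw [pFun_key A hA x φ]
    rw [norm_mul, Complex.norm_real, Real.norm_of_nonneg (by positivity : (0:ℝ) ≤ 1 / Real.pi)]
    refine mul_le_mul_of_nonneg_left ?_ (by positivity)
    refine (norm_sum_le _ _).trans ?_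
    refine Finset.sum_le_sum fun m _ => ?_
    rw [norm_mul, Complex.norm_real, Real.norm_eq_abs]
    have : (g m x) * (starRingEnd ℂ) (g m x) = ((Complex.normSq (g m x) : ℝ) : ℂ) :=
      Complex.mul_conj _
    rw [this, Complex.norm_real, Real.norm_of_nonneg (Complex.normSq_nonneg _), ← hsq m x]
  -- integrability of the bound
  have hBint : Integrable (fun x : ℝ => (1 / Real.pi) * ∑ m : Fin N, |hA.eigenvalues m| *
      (∑ j : Fin N, ∑ k : Fin N, c m j k * (hermiteFun j x * hermiteFun k x))) := by
    refine Integrable.const_mul ?_ _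
    refine integrable_finset_sum _ fun m _ => ?_
    refine Integrable.const_mul ?_ _
    refine integrable_finset_sum _ fun j _ => ?_
    refine integrable_finset_sum _ fun k _ => ?_
    exact (integrable_hermiteFun_mul j k).const_mul _
  -- value of the integral of the bound
  have hBval : (∫ x : ℝ, (1 / Real.pi) * ∑ m : Fin N, |hA.eigenvalues m| *
      (∑ j : Fin N, ∑ k : Fin N, c m j k * (hermiteFun j x * hermiteFun k x))) =
      (1 / Real.pi) * traceNorm A hA := by
    rw [MeasureTheory.integral_const_mul]
    congr 1
    rw [MeasureTheory.integral_finset_sum (μ := MeasureTheory.volume) Finset.univ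
      (f := fun (m : Fin N) (x : ℝ) => |hA.eigenvalues m| *
        (∑ j : Fin N, ∑ k : Fin N, c m j k * (hermiteFun j x * hermiteFun k x)))
      (fun m _ => by
      refine Integrable.const_mul ?_ _
      refine integrable_finset_sum _ fun j _ => ?_
      refine integrable_finset_sum _ fun k _ => ?_
      exact (integrable_hermiteFun_mul j k).const_mul _)]
    rw [traceNorm]
    refine Finset.sum_congr rfl fun m _ => ?_
    rw [MeasureTheory.integral_const_mul]
    have : (∫ x : ℝ, ∑ j : Fin N, ∑ k : Fin N, c m j k * (hermiteFun j x * hermiteFun k x)) =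
        ∑ j : Fin N, ∑ k : Fin N, c m j k * (if (j:ℕ) = (k:ℕ) then (1:ℝ) else 0) := by
      rw [MeasureTheory.integral_finset_sum (μ := MeasureTheory.volume) Finset.univ
        (f := fun (j : Fin N) (x : ℝ) => ∑ k : Fin N, c m j k * (hermiteFun j x * hermiteFun k x))
        (fun j _ => integrable_finset_sum _ fun k _ =>
          (integrable_hermiteFun_mul j k).const_mul _)]
      refine Finset.sum_congr rfl fun j _ => ?_
      rw [MeasureTheory.integral_finset_sum (μ := MeasureTheory.volume) Finset.univ
        (f := fun (k : Fin N) (x : ℝ) => c m j k * (hermiteFun j x * hermiteFun k x))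
        (fun k _ => (integrable_hermiteFun_mul j k).const_mul _)]
      refine Finset.sum_congr rfl fun k _ => ?_
      rw [MeasureTheory.integral_const_mul, integral_hermiteFun_mul]
    rw [this]
    have hdiag : ∀ j : Fin N, c m j j = Complex.normSq (U j m) := by
      intro j
      simp only [hc]
      have : a m j * (starRingEnd ℂ) (a m j) = ((Complex.normSq (a m j) : ℝ) : ℂ) :=
        Complex.mul_conj _
      rw [this, Complex.ofReal_re, ha]
      rw [Complex.normSq_mul]
      have habs : Complex.normSq (Complex.exp (-Complex.I * ((j:ℕ):ℂ) * (φ:ℂ))) = 1 := by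
        rw [Complex.normSq_eq_norm_sq, abs_exp_phase]
        norm_num
      rw [habs, mul_one]
    have hsum : (∑ j : Fin N, ∑ k : Fin N, c m j k * (if (j:ℕ) = (k:ℕ) then (1:ℝ) else 0))
        = ∑ j : Fin N, c m j j := by
      refine Finset.sum_congr rfl fun j _ => ?_
      rw [Finset.sum_eq_single j]
      · simp
      · intro k _ hkj
        have : ¬ ((j:ℕ) = (k:ℕ)) := fun h => hkj (Fin.ext h.symm)
        simp [this]
      · intro h
        exact absurd (Finset.mem_univ j) h
    rw [hsum, Finset.sum_congr rfl fun j _ => hdiag j, column_norm A hA m, mul_one]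
  calc (∫ x : ℝ, ‖pFun A x φ‖)
      ≤ (∫ x : ℝ, (1 / Real.pi) * ∑ m : Fin N, |hA.eigenvalues m| *
          (∑ j : Fin N, ∑ k : Fin N, c m j k * (hermiteFun j x * hermiteFun k x))) := by
        refine MeasureTheory.integral_mono_of_nonneg
          (Filter.Eventually.of_forall fun x => norm_nonneg _) hBint
          (Filter.Eventually.of_forall fun x => hpt x)
    _ = (1 / Real.pi) * traceNorm A hA := hBval

lemma traceNorm_nonneg' : 0 ≤ traceNorm A hA :=
  Finset.sum_nonneg fun i _ => abs_nonneg _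

lemma main_ineq :
    (∫ φ in (0:ℝ)..Real.pi, ∫ x : ℝ, ‖pFun A x φ‖) ≤ traceNorm A hA := by
  by_cases hI : IntervalIntegrable (fun φ => ∫ x : ℝ, ‖pFun A x φ‖)
      MeasureTheory.volume 0 Real.pi
  · have hle := intervalIntegral.integral_mono_on Real.pi_pos.le hI
      (intervalIntegrable_const (c := (1 / Real.pi) * traceNorm A hA))
      (fun φ _ => integral_bound A hA φ)
    refine hle.trans ?_
    rw [intervalIntegral.integral_const, smul_eq_mul]
    rw [sub_zero]
    rw [← mul_assoc, mul_one_div, div_self Real.pi_ne_zero, one_mul]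
  · rw [intervalIntegral.integral_undef hI]
    exact traceNorm_nonneg' A hA

end Main

lemma pFun_sub {N : ℕ} (ρ τ : Matrix (Fin N) (Fin N) ℂ) (x φ : ℝ) :
    pFun (ρ - τ) x φ = pFun ρ x φ - pFun τ x φ := by
  unfold pFun
  rw [← mul_sub, ← Finset.sum_sub_distrib]
  congr 1
  refine Finset.sum_congr rfl fun j _ => ?_
  rw [← Finset.sum_sub_distrib]
  refine Finset.sum_congr rfl fun k _ => ?_
  rw [Matrix.sub_apply]
  ring

/-- for every `N×N` Hermitian matrix `A`,
`∫_0^π ∫_ℝ |p_A(x,φ)| dx dφ ≤ ‖A‖₁`; in particular, for density matrices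
`ρ, τ` the `L¹`-distance of the densities is at most the trace-norm distance. -/
theorem pFun_L1_le_traceNorm (N : ℕ) (A : Matrix (Fin N) (Fin N) ℂ)
    (hA : A.IsHermitian) :
    (∫ φ in (0:ℝ)..Real.pi, ∫ x : ℝ, ‖pFun A x φ‖) ≤ traceNorm A hA ∧
    ∀ ρ τ : Matrix (Fin N) (Fin N) ℂ,
      ∀ hρ : IsDensityMatrix ρ, ∀ hτ : IsDensityMatrix τ,
      (∫ φ in (0:ℝ)..Real.pi, ∫ x : ℝ, ‖pFun ρ x φ - pFun τ x φ‖) ≤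
        traceNorm (ρ - τ) (hρ.1.isHermitian.sub hτ.1.isHermitian) := by
  refine ⟨main_ineq A hA, fun ρ τ hρ hτ => ?_⟩
  have h := main_ineq (ρ - τ) (hρ.1.isHermitian.sub hτ.1.isHermitian)
  have hrw : ∀ (x φ : ℝ), pFun ρ x φ - pFun τ x φ = pFun (ρ - τ) x φ :=
    fun x φ => (pFun_sub ρ τ x φ).symm
  simp only [hrw]
  exact h
end

section
/- For every x ∈ ℝ, the series Σ_{k=0}^∞ ψ_k(x)² diverges to +∞. -/
open MeasureTheory ComplexOrder

lemma physHermite_deriv (n : ℕ) :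
    Polynomial.derivative (physHermite (n+1)) = (2*(n:Polynomial ℝ)+2) * physHermite n := by
  induction n with
  | zero =>
    show Polynomial.derivative (2 * Polynomial.X * physHermite 0
      - Polynomial.derivative (physHermite 0)) = _
    show Polynomial.derivative (2 * Polynomial.X * 1 - Polynomial.derivative 1) = _
    simp [physHermite]
  | succ n ih =>
    have h : physHermite (n+2) = 2 * Polynomial.X * physHermite (n+1)
        - Polynomial.derivative (physHermite (n+1)) := rfl
    have h2 : physHermite (n+1) = 2 * Polynomial.X * physHermite n
        - Polynomial.derivative (physHermite n) := rfl
    rw [h, Polynomial.derivative_sub, ih, Polynomial.derivative_mul, Polynomial.derivative_mul,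
      Polynomial.derivative_X, Polynomial.derivative_ofNat, Polynomial.derivative_mul, ih]
    simp only [Polynomial.derivative_add, Polynomial.derivative_mul, Polynomial.derivative_ofNat,
      Polynomial.derivative_natCast, Polynomial.derivative_X]
    rw [h2]
    push_cast
    ring

lemma hermiteConst_pos (k : ℕ) : 0 < hermiteConst k := by
  unfold hermiteConst
  have h1 : (0:ℝ) < Real.sqrt Real.pi * 2 ^ k * (k.factorial : ℝ) := by
    have := Real.pi_pos
    positivity
  positivity

lemma hermiteConst_succ (k : ℕ) :
    hermiteConst k = Real.sqrt (2*(k:ℝ)+2) * hermiteConst (k+1) := by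
  unfold hermiteConst
  have h1 : (0:ℝ) < Real.sqrt Real.pi * 2 ^ k * (k.factorial : ℝ) := by
    have := Real.pi_pos
    positivity
  have h2 : Real.sqrt Real.pi * 2 ^ (k+1) * ((k+1).factorial : ℝ)
      = (Real.sqrt Real.pi * 2 ^ k * (k.factorial : ℝ)) * (2*(k:ℝ)+2) := by
    rw [Nat.factorial_succ]
    push_cast
    ring
  rw [h2, Real.sqrt_mul h1.le]
  have h3 : (0:ℝ) < Real.sqrt (Real.sqrt Real.pi * 2 ^ k * (k.factorial : ℝ)) :=
    Real.sqrt_pos.2 h1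
  have h4 : (0:ℝ) < Real.sqrt (2*(k:ℝ)+2) := Real.sqrt_pos.2 (by positivity)
  field_simp

lemma hermiteFun_rec (n : ℕ) (x : ℝ) :
    Real.sqrt (2*(n:ℝ)+4) * hermiteFun (n+2) x
      = 2 * x * hermiteFun (n+1) x - Real.sqrt (2*(n:ℝ)+2) * hermiteFun n x := by
  have heval : (physHermite (n+2)).eval x
      = 2*x*(physHermite (n+1)).eval x - (2*(n:ℝ)+2)*(physHermite n).eval x := by
    have h : physHermite (n+2) = 2 * Polynomial.X * physHermite (n+1)
        - Polynomial.derivative (physHermite (n+1)) := rfl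
    rw [h, physHermite_deriv]
    simp
  have e2 : hermiteConst (n+1) = Real.sqrt (2*(n:ℝ)+4) * hermiteConst (n+2) := by
    have := hermiteConst_succ (n+1)
    push_cast at this
    convert this using 3 <;> ring
  have e1 : hermiteConst n = Real.sqrt (2*(n:ℝ)+2) * hermiteConst (n+1) :=
    hermiteConst_succ n
  have hs2 : Real.sqrt (2*(n:ℝ)+2) * Real.sqrt (2*(n:ℝ)+2) = 2*(n:ℝ)+2 :=
    Real.mul_self_sqrt (by positivity)
  unfold hermiteFun
  rw [heval, e1]
  set c1 := hermiteConst (n+1)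
  set c2 := hermiteConst (n+2)
  set E0 := (physHermite n).eval x
  set E1 := (physHermite (n+1)).eval x
  set g := Real.exp (-(x ^ 2) / 2)
  set s := Real.sqrt (2*(n:ℝ)+2)
  set t := Real.sqrt (2*(n:ℝ)+4)
  linear_combination (-(2*x*E1 - (2*(n:ℝ)+2)*E0))*g*e2 + (E0*c1*g)*hs2

lemma hermiteFun_one (x : ℝ) : hermiteFun 1 x = Real.sqrt 2 * x * hermiteFun 0 x := by
  have h0 : hermiteConst 0 = Real.sqrt 2 * hermiteConst 1 := by
    have := hermiteConst_succ 0
    norm_num at this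
    convert this using 2
  have h1 : physHermite 1 = 2 * Polynomial.X := by
    show 2 * Polynomial.X * physHermite 0 - Polynomial.derivative (physHermite 0) = _
    show 2 * Polynomial.X * 1 - Polynomial.derivative 1 = _
    simp
  have h00 : physHermite 0 = 1 := rfl
  unfold hermiteFun
  rw [h1, h00, h0]
  simp only [Polynomial.eval_mul, Polynomial.eval_ofNat, Polynomial.eval_X, Polynomial.eval_one]
  have hs : Real.sqrt 2 * Real.sqrt 2 = 2 := Real.mul_self_sqrt (by norm_num)
  linear_combination (-(hermiteConst 1 * x * Real.exp (-(x ^ 2) / 2))) * hs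

lemma sum_sq_eq (x : ℝ) (n : ℕ) :
    ∑ k ∈ Finset.range (n+1), (hermiteFun k x)^2
      = ((n:ℝ)+1) * ((hermiteFun n x)^2 + (hermiteFun (n+1) x)^2)
        - Real.sqrt (2*(n:ℝ)+2) * x * hermiteFun n x * hermiteFun (n+1) x := by
  induction n with
  | zero =>
    rw [Finset.sum_range_one, hermiteFun_one]
    have hc : (2*((0:ℕ):ℝ)+2) = 2 := by norm_num
    rw [hc]
    have hs : Real.sqrt 2 * Real.sqrt 2 = 2 := Real.mul_self_sqrt (by norm_num)
    push_cast
    ring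
  | succ n ih =>
    rw [Finset.sum_range_succ, ih]
    have ht := hermiteFun_rec n x
    have hs2 : Real.sqrt (2*(n:ℝ)+2) * Real.sqrt (2*(n:ℝ)+2) = 2*(n:ℝ)+2 :=
      Real.mul_self_sqrt (by positivity)
    have ht2 : Real.sqrt (2*(n:ℝ)+4) * Real.sqrt (2*(n:ℝ)+4) = 2*(n:ℝ)+4 :=
      Real.mul_self_sqrt (by positivity)
    have hc : (2*((n+1:ℕ):ℝ)+2) = 2*(n:ℝ)+4 := by push_cast; ring
    rw [hc]
    set s := Real.sqrt (2*(n:ℝ)+2)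
    set t := Real.sqrt (2*(n:ℝ)+4)
    set u0 := hermiteFun n x
    set u1 := hermiteFun (n+1) x
    set u2 := hermiteFun (n+2) x
    push_cast
    linear_combination (-((t*u2 - s*u0)/2))*ht + (u2^2/2)*ht2 - (u0^2/2)*hs2

lemma hermiteFun_zero_pos (x : ℝ) : 0 < hermiteFun 0 x := by
  unfold hermiteFun
  have h : physHermite 0 = 1 := rfl
  rw [h]
  simp only [Polynomial.eval_one]
  have := hermiteConst_pos 0
  positivity

set_option maxHeartbeats 1000000 in
/-- for every `x ∈ ℝ`, the series `Σ_k ψ_k(x)²` diverges to `+∞`. -/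
theorem sum_sq_hermiteFun_tendsto_atTop (x : ℝ) :
    Filter.Tendsto (fun n : ℕ => ∑ k ∈ Finset.range n, (hermiteFun k x) ^ 2)
      Filter.atTop Filter.atTop := by
  rw [← not_summable_iff_tendsto_nat_atTop_of_nonneg (fun k => sq_nonneg (hermiteFun k x))]
  intro hsum
  have h0 := hermiteFun_zero_pos x
  have hP : Summable (fun n : ℕ => (hermiteFun n x)^2 + (hermiteFun (n+1) x)^2) :=
    hsum.add ((summable_nat_add_iff 1).2 hsum)
  have key : ∀ n : ℕ, 2*x^2 ≤ (n:ℝ)+1 →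
      (hermiteFun 0 x)^2 / (2*((n:ℝ)+1)) ≤ (hermiteFun n x)^2 + (hermiteFun (n+1) x)^2 := by
    intro n hn
    have hid := sum_sq_eq x n
    have hS0 : (hermiteFun 0 x)^2 ≤ ∑ k ∈ Finset.range (n+1), (hermiteFun k x)^2 := by
      have h1 : (hermiteFun 0 x)^2 = ∑ k ∈ Finset.range 1, (hermiteFun k x)^2 := by simp
      rw [h1]
      exact Finset.sum_le_sum_of_subset_of_nonneg
        (Finset.range_subset_range.2 (by omega)) (fun i _ _ => sq_nonneg _)
    have hs2 : Real.sqrt (2*(n:ℝ)+2) * Real.sqrt (2*(n:ℝ)+2) = 2*(n:ℝ)+2 :=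
      Real.mul_self_sqrt (by positivity)
    have hs0 : (0:ℝ) ≤ Real.sqrt (2*(n:ℝ)+2) := Real.sqrt_nonneg _
    set s := Real.sqrt (2*(n:ℝ)+2) with hs
    set a := hermiteFun n x
    set b := hermiteFun (n+1) x
    rw [hid] at hS0
    rw [div_le_iff₀ (by positivity)]
    have hn1 : (0:ℝ) < (n:ℝ)+1 := by positivity
    have h4 : (0:ℝ) ≤ (s*x*a + ((n:ℝ)+1)*b)^2 := sq_nonneg _
    have h6 : (0:ℝ) ≤ (2*(n:ℝ)+2)*x^2*a^2 + 2*((n:ℝ)+1)*(s*x*a*b) + ((n:ℝ)+1)^2*b^2 := by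
      have h5 : (s*x*a + ((n:ℝ)+1)*b)^2
          = (2*(n:ℝ)+2)*x^2*a^2 + 2*((n:ℝ)+1)*(s*x*a*b) + ((n:ℝ)+1)^2*b^2 := by
        linear_combination (x^2*a^2)*hs2
      linarith [h5 ▸ h4]
    have h7 : (0:ℝ) ≤ (((n:ℝ)+1) - 2*x^2)*a^2*((n:ℝ)+1) :=
      mul_nonneg (mul_nonneg (sub_nonneg.2 hn) (sq_nonneg a)) hn1.le
    have hextra : (0:ℝ) ≤ ((n:ℝ)+1)*((n:ℝ)+1)*(a^2+b^2) :=
      mul_nonneg (mul_nonneg hn1.le hn1.le) (add_nonneg (sq_nonneg a) (sq_nonneg b))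
    have h8 : (2*((n:ℝ)+1)) * (-(s*x*a*b)) ≤ (2*((n:ℝ)+1)) * (((n:ℝ)+1)*(a^2+b^2)) := by
      nlinarith [h6, h7, hextra]

    have h9 : -(s*x*a*b) ≤ ((n:ℝ)+1)*(a^2+b^2) :=
      le_of_mul_le_mul_left h8 (by positivity)
    nlinarith [hS0, h9]
  set N := ⌈2*x^2⌉₊ with hN
  have hg : Summable (fun n : ℕ => (hermiteFun 0 x)^2 / (2*((n:ℝ)+1))) := by
    rw [← summable_nat_add_iff N]
    refine Summable.of_nonneg_of_le (fun n => by positivity) (fun n => ?_)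
      ((summable_nat_add_iff N).2 hP)
    have hcond : 2*x^2 ≤ ((n+N:ℕ):ℝ)+1 := by
      have h1 : 2*x^2 ≤ (N:ℝ) := Nat.le_ceil _
      have h2 : (N:ℝ) ≤ ((n+N:ℕ):ℝ)+1 := by push_cast; linarith [Nat.cast_nonneg (α := ℝ) n]
      linarith
    exact key (n+N) hcond
  have h1 : Summable (fun n : ℕ => 1/((n:ℝ)+1)) := by
    have h2 := hg.mul_left (2/(hermiteFun 0 x)^2)
    convert h2 using 2 with n
    case e'_3 => rfl
    have hu : (hermiteFun 0 x)^2 ≠ 0 := by positivity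
    field_simp
  have h3 : Summable (fun n : ℕ => 1/(((n+1:ℕ)):ℝ)) := by
    convert h1 using 2 with n
    push_cast
    ring
  exact Real.not_summable_one_div_natCast ((summable_nat_add_iff 1).1 h3)
end
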